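/- For any field F, the natural homomorphism from the amalgamated free product SL₂(F[t]) *_{Γ(F)} SL₂(F[t]) to SL₂(F[t,t⁻¹]) — induced on the first free factor by the inclusion SL₂(F[t]) ↪ SL₂(F[t,t⁻¹]) and on the second free factor by the map i₂, where both edge maps are the inclusion Γ(F) ↪ SL₂(F[t]) — is an isomorphism of groups. -/

import Mathlib

open Matrix MatrixGroups Polynomial LaurentPolynomial

namespace Paper

variable (R : Type) [CommRing R]

lemma entry00 (A B : SL(2, R)) : (↑(A * B) : Matrix (Fin 2) (Fin 2) R) 0 0
    = A.1 0 0 * B.1 0 0 + A.1 0 1 * B.1 1 0 := by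
  simp [Matrix.SpecialLinearGroup.coe_mul, Matrix.mul_apply, Fin.sum_univ_two]

lemma entry01 (A B : SL(2, R)) : (↑(A * B) : Matrix (Fin 2) (Fin 2) R) 0 1
    = A.1 0 0 * B.1 0 1 + A.1 0 1 * B.1 1 1 := by
  simp [Matrix.SpecialLinearGroup.coe_mul, Matrix.mul_apply, Fin.sum_univ_two]

lemma entry10 (A B : SL(2, R)) : (↑(A * B) : Matrix (Fin 2) (Fin 2) R) 1 0
    = A.1 1 0 * B.1 0 0 + A.1 1 1 * B.1 1 0 := by
  simp [Matrix.SpecialLinearGroup.coe_mul, Matrix.mul_apply, Fin.sum_univ_two]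

lemma entry11 (A B : SL(2, R)) : (↑(A * B) : Matrix (Fin 2) (Fin 2) R) 1 1
    = A.1 1 0 * B.1 0 1 + A.1 1 1 * B.1 1 1 := by
  simp [Matrix.SpecialLinearGroup.coe_mul, Matrix.mul_apply, Fin.sum_univ_two]

/-- The subgroup of upper triangular matrices in `SL₂(R)`. -/
def Bsub : Subgroup (Matrix.SpecialLinearGroup (Fin 2) R) where
  carrier := {A | A.1 1 0 = 0}
  one_mem' := by
    show ((1 : SL(2, R)) : Matrix (Fin 2) (Fin 2) R) 1 0 = 0
    simp [Matrix.SpecialLinearGroup.coe_one, Matrix.one_apply]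
  mul_mem' {A B} hA hB := by
    show (↑(A * B) : Matrix (Fin 2) (Fin 2) R) 1 0 = 0
    rw [entry10]
    simp only [Set.mem_setOf_eq] at hA hB
    rw [hA, hB]; ring
  inv_mem' {A} hA := by
    show (↑(A⁻¹) : Matrix (Fin 2) (Fin 2) R) 1 0 = 0
    rw [Matrix.SpecialLinearGroup.SL2_inv_expl A]
    simp only [Set.mem_setOf_eq] at hA
    simp [hA]

/-- The subgroup of matrices in `SL₂(R[t])` whose lower-left entry is divisible by `t`. -/
def Psub : Subgroup (Matrix.SpecialLinearGroup (Fin 2) (Polynomial R)) where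
  carrier := {A | (X : R[X]) ∣ A.1 1 0}
  one_mem' := by
    show (X : R[X]) ∣ ((1 : SL(2, R[X])) : Matrix (Fin 2) (Fin 2) R[X]) 1 0
    simp [Matrix.SpecialLinearGroup.coe_one, Matrix.one_apply]
  mul_mem' {A B} hA hB := by
    show (X : R[X]) ∣ (↑(A * B) : Matrix (Fin 2) (Fin 2) R[X]) 1 0
    rw [entry10]
    exact dvd_add (hA.mul_right _) (hB.mul_left _)
  inv_mem' {A} hA := by
    show (X : R[X]) ∣ (↑(A⁻¹) : Matrix (Fin 2) (Fin 2) R[X]) 1 0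
    rw [Matrix.SpecialLinearGroup.SL2_inv_expl A]
    simp only [Set.mem_setOf_eq] at hA
    simpa using hA.neg_right

/-- The elementary matrix `(1 r; 0 1)`. -/
def elUp (r : R) : SL(2, R) :=
  ⟨!![1, r; 0, 1], by simp [Matrix.det_fin_two_of]⟩

/-- The elementary matrix `(1 0; r 1)`. -/
def elLow (r : R) : SL(2, R) :=
  ⟨!![1, 0; r, 1], by simp [Matrix.det_fin_two_of]⟩

/-- The subgroup `E₂(R)` of `SL₂(R)` generated by the elementary matrices. -/
def Esub : Subgroup (Matrix.SpecialLinearGroup (Fin 2) R) :=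
  Subgroup.closure {A | (∃ r : R, A = elUp R r) ∨ (∃ r : R, A = elLow R r)}

variable {R}

lemma divX_X_mul (p : R[X]) : (X * p).divX = p := by
  ext n
  rw [Polynomial.coeff_divX, Polynomial.coeff_X_mul]

lemma X_mul_divX {p : R[X]} (h : (X : R[X]) ∣ p) : X * p.divX = p := by
  obtain ⟨c, rfl⟩ := h
  rw [divX_X_mul]

lemma X_mul_cancel {p q : R[X]} (h : X * p = X * q) : p = q := by
  ext n
  have := congrArg (fun r => Polynomial.coeff r (n + 1)) h
  simpa [Polynomial.coeff_X_mul] using this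

variable (R)

/-- The matrix underlying `conjP`. -/
noncomputable def conjMat (A : SL(2, R[X])) : Matrix (Fin 2) (Fin 2) R[X] :=
  !![A.1 0 0, X * A.1 0 1; (A.1 1 0).divX, A.1 1 1]

lemma conjMat_det {A : SL(2, R[X])} (hA : (X : R[X]) ∣ A.1 1 0) : (conjMat R A).det = 1 := by
  rw [conjMat, Matrix.det_fin_two_of]
  have h : X * (A.1 1 0).divX = A.1 1 0 := X_mul_divX hA
  have hd : A.1 0 0 * A.1 1 1 - A.1 0 1 * A.1 1 0 = 1 := by
    rw [← Matrix.det_fin_two]; exact A.2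
  calc A.1 0 0 * A.1 1 1 - X * A.1 0 1 * (A.1 1 0).divX
      = A.1 0 0 * A.1 1 1 - A.1 0 1 * (X * (A.1 1 0).divX) := by ring
    _ = 1 := by rw [h]; exact hd

lemma conjMat_mul {A B : SL(2, R[X])} (hA : (X : R[X]) ∣ A.1 1 0)
    (hB : (X : R[X]) ∣ B.1 1 0) :
    conjMat R (A * B) = conjMat R A * conjMat R B := by
  have h00 : A.1 0 0 * B.1 0 0 + A.1 0 1 * B.1 1 0
      = A.1 0 0 * B.1 0 0 + (X * A.1 0 1) * (B.1 1 0).divX := by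
    rw [show (X * A.1 0 1) * (B.1 1 0).divX = A.1 0 1 * (X * (B.1 1 0).divX) by ring,
      X_mul_divX hB]
  have h01 : X * (A.1 0 0 * B.1 0 1 + A.1 0 1 * B.1 1 1)
      = A.1 0 0 * (X * B.1 0 1) + (X * A.1 0 1) * B.1 1 1 := by ring
  have h10 : (A.1 1 0 * B.1 0 0 + A.1 1 1 * B.1 1 0).divX
      = (A.1 1 0).divX * B.1 0 0 + A.1 1 1 * (B.1 1 0).divX := by
    apply X_mul_cancel
    rw [X_mul_divX (dvd_add (hA.mul_right _) (hB.mul_left _))]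
    rw [mul_add,
      show X * ((A.1 1 0).divX * B.1 0 0) = (X * (A.1 1 0).divX) * B.1 0 0 by ring,
      X_mul_divX hA,
      show X * (A.1 1 1 * (B.1 1 0).divX) = A.1 1 1 * (X * (B.1 1 0).divX) by ring,
      X_mul_divX hB]
  have h11 : A.1 1 0 * B.1 0 1 + A.1 1 1 * B.1 1 1
      = (A.1 1 0).divX * (X * B.1 0 1) + A.1 1 1 * B.1 1 1 := by
    rw [show (A.1 1 0).divX * (X * B.1 0 1) = (X * (A.1 1 0).divX) * B.1 0 1 by ring,
      X_mul_divX hA]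
  rw [conjMat, conjMat, conjMat, entry00, entry01, entry10, entry11,
    Matrix.mul_fin_two, h10]
  rw [show (A.1 1 0 * B.1 0 1 + A.1 1 1 * B.1 1 1) = (A.1 1 0).divX * (X * B.1 0 1) + A.1 1 1 * B.1 1 1 from h11]
  rw [show (A.1 0 0 * B.1 0 0 + A.1 0 1 * B.1 1 0) = A.1 0 0 * B.1 0 0 + (X * A.1 0 1) * (B.1 1 0).divX from h00]
  rw [show X * (A.1 0 0 * B.1 0 1 + A.1 0 1 * B.1 1 1) = A.1 0 0 * (X * B.1 0 1) + (X * A.1 0 1) * B.1 1 1 from h01]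

/-- The second edge embedding `P → SL₂(R[t])`, conjugation by `diag(1,t)⁻¹` inside
`SL₂(R[t,t⁻¹])`: `(a, b; t·c, d) ↦ (a, t·b; c, d)`. -/
noncomputable def conjP : ↥(Psub R) →* SL(2, R[X]) where
  toFun A := ⟨conjMat R A.1, conjMat_det R A.2⟩
  map_one' := by
    apply Subtype.ext
    show conjMat R 1 = 1
    rw [conjMat]
    have h00 : ((1 : SL(2, R[X])) : Matrix (Fin 2) (Fin 2) R[X]) 0 0 = 1 := by
      rw [Matrix.SpecialLinearGroup.coe_one]; simp [Matrix.one_apply]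
    have h01 : ((1 : SL(2, R[X])) : Matrix (Fin 2) (Fin 2) R[X]) 0 1 = 0 := by
      rw [Matrix.SpecialLinearGroup.coe_one]; simp [Matrix.one_apply]
    have h10 : ((1 : SL(2, R[X])) : Matrix (Fin 2) (Fin 2) R[X]) 1 0 = 0 := by
      rw [Matrix.SpecialLinearGroup.coe_one]; simp [Matrix.one_apply]
    have h11 : ((1 : SL(2, R[X])) : Matrix (Fin 2) (Fin 2) R[X]) 1 1 = 1 := by
      rw [Matrix.SpecialLinearGroup.coe_one]; simp [Matrix.one_apply]
    rw [h00, h01, h10, h11, mul_zero, Polynomial.divX_zero, ← Matrix.one_fin_two]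
  map_mul' A B := by
    apply Subtype.ext
    show conjMat R (A.1 * B.1) = conjMat R A.1 * conjMat R B.1
    exact conjMat_mul R A.2 B.2

/-- The diagonal matrix `diag(1, t)` as a unit of the ring of 2×2 matrices over `R[t,t⁻¹]`. -/
noncomputable def DT : (Matrix (Fin 2) (Fin 2) (LaurentPolynomial R))ˣ where
  val := Matrix.diagonal ![1, LaurentPolynomial.T 1]
  inv := Matrix.diagonal ![1, LaurentPolynomial.T (-1)]
  val_inv := by
    rw [Matrix.diagonal_mul_diagonal]
    have : (fun i => (![1, LaurentPolynomial.T 1] : Fin 2 → LaurentPolynomial R) i *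
        ![1, LaurentPolynomial.T (-1)] i) = fun _ => (1 : LaurentPolynomial R) := by
      funext i
      fin_cases i
      · simp
      · show LaurentPolynomial.T 1 * LaurentPolynomial.T (-1) = 1
        rw [← LaurentPolynomial.T_add]; simp
    rw [this, Matrix.diagonal_one]
  inv_val := by
    rw [Matrix.diagonal_mul_diagonal]
    have : (fun i => (![1, LaurentPolynomial.T (-1)] : Fin 2 → LaurentPolynomial R) i *
        ![1, LaurentPolynomial.T 1] i) = fun _ => (1 : LaurentPolynomial R) := by
      funext i
      fin_cases i
      · simp
      · show LaurentPolynomial.T (-1) * LaurentPolynomial.T 1 = 1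
        rw [← LaurentPolynomial.T_add]; simp
    rw [this, Matrix.diagonal_one]

lemma DT_conj_det (M : Matrix (Fin 2) (Fin 2) (LaurentPolynomial R)) :
    (((DT R) : Matrix (Fin 2) (Fin 2) (LaurentPolynomial R)) * M * ((DT R)⁻¹).val).det = M.det := by
  rw [Matrix.det_mul, Matrix.det_mul]
  have h : ((DT R) : Matrix (Fin 2) (Fin 2) (LaurentPolynomial R)).det *
      ((DT R)⁻¹ : (Matrix (Fin 2) (Fin 2) (LaurentPolynomial R))ˣ).1.det = 1 := by
    rw [← Matrix.det_mul, Units.mul_inv, Matrix.det_one]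
  calc ((DT R) : Matrix (Fin 2) (Fin 2) (LaurentPolynomial R)).det * M.det * (((DT R)⁻¹).val).det
      = ((DT R) : Matrix (Fin 2) (Fin 2) (LaurentPolynomial R)).det * (((DT R)⁻¹).val).det * M.det := by ring
    _ = M.det := by rw [h, one_mul]

/-- The homomorphism `i₂ : SL₂(R[t]) → SL₂(R[t,t⁻¹])`, `A ↦ diag(1,t)·A·diag(1,t⁻¹)`. -/
noncomputable def i₂SL : SL(2, Polynomial R) →* SL(2, LaurentPolynomial R) where
  toFun A := ⟨(DT R : Matrix (Fin 2) (Fin 2) (LaurentPolynomial R)) *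
      A.1.map Polynomial.toLaurent * ↑(DT R)⁻¹, by
    rw [DT_conj_det]
    have : (A.1.map (Polynomial.toLaurent : R[X] → LaurentPolynomial R)).det
        = Polynomial.toLaurent A.1.det := by
      rw [← RingHom.mapMatrix_apply, ← RingHom.map_det]
    rw [this, A.2, _root_.map_one]⟩
  map_one' := by
    apply Subtype.ext
    show (DT R : Matrix (Fin 2) (Fin 2) (LaurentPolynomial R)) *
      ((1 : SL(2, R[X])).1.map Polynomial.toLaurent) * ((DT R)⁻¹ : (Matrix (Fin 2) (Fin 2) (LaurentPolynomial R))ˣ).val = 1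
    rw [Matrix.SpecialLinearGroup.coe_one]
    rw [show ((1 : Matrix (Fin 2) (Fin 2) R[X]).map (Polynomial.toLaurent : R[X] → _)) = 1 from
      Matrix.map_one _ (map_zero _) (map_one _)]
    rw [mul_one, Units.mul_inv]
  map_mul' A B := by
    apply Subtype.ext
    show (DT R : Matrix (Fin 2) (Fin 2) (LaurentPolynomial R)) *
        ((A * B).1.map Polynomial.toLaurent) * ((DT R)⁻¹ : (Matrix (Fin 2) (Fin 2) (LaurentPolynomial R))ˣ).val = _
    rw [Matrix.SpecialLinearGroup.coe_mul]
    rw [show ((A.1 * B.1).map (Polynomial.toLaurent : R[X] → _))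
        = A.1.map Polynomial.toLaurent * B.1.map Polynomial.toLaurent from
      Matrix.map_mul]
    show _ = ((DT R : Matrix (Fin 2) (Fin 2) (LaurentPolynomial R)) *
        A.1.map Polynomial.toLaurent * ((DT R)⁻¹ : (Matrix (Fin 2) (Fin 2) (LaurentPolynomial R))ˣ).val) *
      ((DT R : Matrix (Fin 2) (Fin 2) (LaurentPolynomial R)) *
        B.1.map Polynomial.toLaurent * ((DT R)⁻¹ : (Matrix (Fin 2) (Fin 2) (LaurentPolynomial R))ˣ).val)
    simp only [mul_assoc, Units.inv_mul_cancel_left]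

end Paper
namespace Paper

variable (R : Type) [CommRing R]

lemma T_conj (f : LaurentPolynomial R) :
    LaurentPolynomial.T 1 * f * LaurentPolynomial.T (-1) = f := by
  rw [mul_assoc, LaurentPolynomial.T_mul, LaurentPolynomial.mul_T_assoc]
  simp

/-- Compatibility: `i₂ ∘ conjP` is the canonical inclusion on `P`. -/
lemma i₂SL_conjP (A : ↥(Psub R)) :
    i₂SL R (conjP R A) = Matrix.SpecialLinearGroup.map Polynomial.toLaurent A.1 := by
  have hA : (X : R[X]) ∣ A.1.1 1 0 := A.2
  apply Subtype.ext
  show (DT R : Matrix (Fin 2) (Fin 2) (LaurentPolynomial R)) *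
      (conjMat R A.1).map Polynomial.toLaurent * ((DT R)⁻¹ : (Matrix (Fin 2) (Fin 2) (LaurentPolynomial R))ˣ).val
    = (Polynomial.toLaurent : R[X] →+* _).mapMatrix A.1.1
  rw [RingHom.mapMatrix_apply]
  have hD : (DT R : Matrix (Fin 2) (Fin 2) (LaurentPolynomial R))
      = Matrix.diagonal ![1, LaurentPolynomial.T 1] := rfl
  have hD' : ((DT R)⁻¹ : (Matrix (Fin 2) (Fin 2) (LaurentPolynomial R))ˣ).val
      = Matrix.diagonal ![1, LaurentPolynomial.T (-1)] := rfl
  rw [hD, hD', ← Matrix.ext_iff]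
  intro i j
  rw [Matrix.mul_diagonal, Matrix.diagonal_mul, Matrix.map_apply, Matrix.map_apply]
  fin_cases i <;> fin_cases j <;>
    simp only [conjMat, Fin.zero_eta, Fin.mk_one, Fin.isValue, id_eq,
      Matrix.cons_val', Matrix.cons_val_zero, Matrix.cons_val_one, Matrix.head_cons,
      Matrix.empty_val', Matrix.cons_val_fin_one, Matrix.head_fin_const, Matrix.of_apply]
  · rw [one_mul, mul_one]
  · rw [one_mul, _root_.map_mul, Polynomial.toLaurent_X, mul_comm (LaurentPolynomial.T 1),
      LaurentPolynomial.mul_T_assoc]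
    simp
  · rw [mul_one, ← Polynomial.toLaurent_X, ← _root_.map_mul, X_mul_divX hA]
  · exact T_conj R _

end Paper
namespace Paper

variable (R : Type) [CommRing R]

/-- The two edge embeddings of `P` into the two copies of `SL₂(R[t])`: the first is the
inclusion, the second is the inclusion conjugated by `diag(1,t)` (i.e. the identification of
`P` with a subgroup of the second vertex group of the tree of groups). -/
noncomputable def edgesP : Bool → (↥(Psub R) →* SL(2, Polynomial R))
  | true => (Psub R).subtype
  | false => conjP R

/-- On the first free factor, the canonical inclusion `SL₂(R[t]) → SL₂(R[t,t⁻¹])`;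
on the second free factor, the map `i₂`. -/
noncomputable def legsP : Bool → (SL(2, Polynomial R) →* SL(2, LaurentPolynomial R))
  | true => Matrix.SpecialLinearGroup.map Polynomial.toLaurent
  | false => i₂SL R

lemma compatP : ∀ b, (legsP R b).comp (edgesP R b)
    = (Matrix.SpecialLinearGroup.map (Polynomial.toLaurent : R[X] →+* LaurentPolynomial R)).comp
        (Psub R).subtype := by
  intro b
  cases b
  · exact MonoidHom.ext fun A => i₂SL_conjP R A
  · rfl

/-- The natural homomorphism from the amalgamated free product
`SL₂(R[t]) *_P SL₂(R[t])` to `SL₂(R[t,t⁻¹])`. -/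
noncomputable def amalgamToSL : Monoid.PushoutI (edgesP R) →* SL(2, LaurentPolynomial R) :=
  Monoid.PushoutI.lift (legsP R)
    ((Matrix.SpecialLinearGroup.map (Polynomial.toLaurent : R[X] →+* LaurentPolynomial R)).comp
      (Psub R).subtype)
    (compatP R)

end Paper


/-!
Injectivity is a ping-pong argument. A nonempty reduced word of the amalgam alternates between
letters `A` of the first factor whose lower-left entry is not divisible by `t` and letters `B` of
the second factor whose upper-right entry is not divisible by `t`. Since `t · i₂(B)` has
polynomial entries, the image of the word is `t⁻ᵏ P`, with `k` the number of letters of the second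
kind and `P` the product of the polynomial matrices `A` and `t · i₂(B)`. Modulo `t` these become
matrices with a nonzero lower-left entry and nonzero multiples of `E₁₂`, and over a domain an
alternating product of such matrices is never zero. So for `k > 0` the image is not a polynomial
matrix, while for `k = 0` the word is a single letter `A ∉ Γ`; in both cases the image misses the
image of `Γ`.

Surjectivity: the image contains `diag(t, t⁻¹) = w · i₂(w)⁻¹`, where `w = (0 1; -1 0)`, hence,
by conjugating with its powers, every elementary matrix over `F[t,t⁻¹]`. These generate
`SL₂(F[t,t⁻¹])` because division with remainder in `F[t]` gives a Euclidean algorithm on the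
first column, measured by the degree of the polynomial part `p` of a Laurent polynomial `p · tᵐ`.
-/

namespace Monoid.PushoutI

open CoprodI

variable {ι : Type*} {G : ι → Type*} {H : Type*} [∀ i, Group (G i)] [Group H]
  {φ : ∀ i, H →* G i}

theorem NormalWord.Transversal.eq_one_of_mem_set_of_mem_range (d : NormalWord.Transversal φ)
    {i : ι} {g : G i} (hset : g ∈ d.set i) (hrange : g ∈ (φ i).range) : g = 1 := by
  have h := (d.compl i).equiv_fst_eq_self_of_mem_of_one_mem (d.one_mem i) hrange
  rw [(d.compl i).equiv_fst_eq_one_of_mem_of_one_mem (φ i).range.one_mem hset] at h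
  exact congrArg Subtype.val h.symm

theorem NormalWord.reduced {d : NormalWord.Transversal φ} (w : NormalWord d) :
    Reduced φ w.toWord := fun σ hσ hrange =>
  w.ne_one σ hσ (d.eq_one_of_mem_set_of_mem_range (w.normalized σ.1 σ.2 hσ) hrange)

theorem injective_of_reduced_word_not_mem_range {K : Type*} [Group K]
    (hφ : ∀ i, Function.Injective (φ i)) (f : PushoutI φ →* K)
    (hbase : Function.Injective (f.comp (base φ)))
    (hword : ∀ w : Word G, Reduced φ w → w ≠ .empty →
      f (ofCoprodI w.prod) ∉ (f.comp (base φ)).range) :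
    Function.Injective f := by
  classical
  obtain ⟨d⟩ := NormalWord.transversal_nonempty φ hφ
  rw [injective_iff_map_eq_one]
  intro x hx
  obtain ⟨w, rfl⟩ : ∃ w : NormalWord d, w.prod = x :=
    ⟨NormalWord.equiv x, NormalWord.equiv.symm_apply_apply x⟩
  rw [NormalWord.prod, map_mul, mul_eq_one_iff_eq_inv, ← map_inv] at hx
  have hempty : w.toWord = .empty := by_contra fun hne =>
    hword w.toWord w.reduced hne ⟨w.head⁻¹, by simp [hx]⟩
  have hhead : w.head = 1 := hbase (by simpa [hempty] using hx)
  simp [NormalWord.prod, hempty, hhead]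

end Monoid.PushoutI

theorem Matrix.SpecialLinearGroup.map_injective {n : Type*} [DecidableEq n] [Fintype n]
    {R S : Type*} [CommRing R] [CommRing S] {f : R →+* S} (hf : Function.Injective f) :
    Function.Injective (Matrix.SpecialLinearGroup.map (n := n) f) := fun _ _ h =>
  Subtype.ext (Matrix.map_injective hf (congrArg Subtype.val h))

theorem List.exists_eq_singleton_of_isChain_of_countP_eq_zero {α : Bool → Type*}
    {l : List (Σ b, α b)} (hl : l ≠ []) (hchain : l.IsChain (fun σ τ => σ.1 ≠ τ.1))
    (hcount : l.countP (fun σ => !σ.1) = 0) : ∃ a, l = [⟨true, a⟩] := by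
  have hall : ∀ σ ∈ l, σ.1 = true := by simpa using List.countP_eq_zero.mp hcount
  match l, hchain with
  | [⟨b, a⟩], _ =>
    obtain rfl : b = true := hall _ List.mem_cons_self
    exact ⟨a, rfl⟩
  | σ :: τ :: _, hchain =>
    exact absurd ((hall σ (by simp)).trans (hall τ (by simp)).symm)
      (List.isChain_cons_cons.mp hchain).1

namespace Paper

open Matrix

section PingPong

variable {R : Type*} [Semiring R]

def PingPongLetter : Bool → Matrix (Fin 2) (Fin 2) R → Prop
  | true, M => M 1 0 ≠ 0
  | false, M => ∃ b ≠ 0, M = !![0, b; 0, 0]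

def PingPongState : Bool → (Fin 2 → R) → Prop
  | true, v => v 1 ≠ 0
  | false, v => v 0 ≠ 0 ∧ v 1 = 0

theorem PingPongLetter.state_mulVec [NoZeroDivisors R] {b : Bool}
    {M : Matrix (Fin 2) (Fin 2) R} {v : Fin 2 → R} (hM : PingPongLetter b M)
    (hv : PingPongState (!b) v) : PingPongState b (M *ᵥ v) := by
  cases b
  · obtain ⟨c, hc, rfl⟩ := hM
    exact ⟨by simpa [mulVec, dotProduct, Fin.sum_univ_two] using mul_ne_zero hc hv,
      by simp [mulVec, dotProduct, Fin.sum_univ_two]⟩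
  · obtain ⟨hv0, hv1⟩ := hv
    simpa [PingPongState, mulVec, dotProduct, Fin.sum_univ_two, hv1] using mul_ne_zero hM hv0

theorem PingPongLetter.exists_state_mulVec_single {b : Bool} {M : Matrix (Fin 2) (Fin 2) R}
    (hM : PingPongLetter b M) : ∃ j, PingPongState b (M *ᵥ Pi.single j 1) := by
  cases b
  · obtain ⟨c, hc, rfl⟩ := hM
    exact ⟨1, by simpa [PingPongState, mulVec_single_one] using hc⟩
  · exact ⟨0, by simpa [PingPongLetter, PingPongState, mulVec_single_one] using hM⟩

theorem exists_pingPongState_prod_mulVec_single [NoZeroDivisors R] :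
    ∀ (l : List (Σ _ : Bool, Matrix (Fin 2) (Fin 2) R)) (hl : l ≠ []),
      l.IsChain (fun σ τ => σ.1 ≠ τ.1) → (∀ σ ∈ l, PingPongLetter σ.1 σ.2) →
      ∃ j, PingPongState (l.head hl).1 ((l.map Sigma.snd).prod *ᵥ Pi.single j 1)
  | [σ], _, _, hletters => by simpa using (hletters σ (by simp)).exists_state_mulVec_single
  | σ :: τ :: l, _, hchain, hletters => by
    obtain ⟨j, hj⟩ := exists_pingPongState_prod_mulVec_single (τ :: l) (List.cons_ne_nil _ _)
      hchain.tail fun ρ hρ => hletters ρ (List.mem_cons_of_mem _ hρ)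
    have hτ : τ.1 = !σ.1 := Bool.eq_not_iff.mpr (List.isChain_cons_cons.mp hchain).1.symm
    refine ⟨j, ?_⟩
    rw [List.map_cons, List.prod_cons, ← mulVec_mulVec]
    exact (hletters σ List.mem_cons_self).state_mulVec (hτ ▸ hj)

theorem prod_ne_zero_of_isChain [NoZeroDivisors R]
    (l : List (Σ _ : Bool, Matrix (Fin 2) (Fin 2) R)) (hl : l ≠ [])
    (hchain : l.IsChain (fun σ τ => σ.1 ≠ τ.1)) (hletters : ∀ σ ∈ l, PingPongLetter σ.1 σ.2) :
    (l.map Sigma.snd).prod ≠ 0 := by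
  obtain ⟨j, hj⟩ := exists_pingPongState_prod_mulVec_single l hl hchain hletters
  intro h
  cases hb : (l.head hl).1 <;> simp [hb, h, PingPongState] at hj

end PingPong

section Elementary

variable {R : Type} [CommRing R]

theorem coe_elUp (r : R) : (elUp R r : Matrix (Fin 2) (Fin 2) R) = !![1, r; 0, 1] := rfl

theorem coe_elLow (r : R) : (elLow R r : Matrix (Fin 2) (Fin 2) R) = !![1, 0; r, 1] := rfl

theorem map_elUp {S : Type} [CommRing S] (f : R →+* S) (r : R) :
    Matrix.SpecialLinearGroup.map f (elUp R r) = elUp S (f r) := by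
  refine Subtype.ext ?_
  simp only [Matrix.SpecialLinearGroup.map_apply_coe, coe_elUp]
  ext i j
  fin_cases i <;> fin_cases j <;> simp

theorem map_elLow {S : Type} [CommRing S] (f : R →+* S) (r : R) :
    Matrix.SpecialLinearGroup.map f (elLow R r) = elLow S (f r) := by
  refine Subtype.ext ?_
  simp only [Matrix.SpecialLinearGroup.map_apply_coe, coe_elLow]
  ext i j
  fin_cases i <;> fin_cases j <;> simp

variable (R) in
def diagUnits : Rˣ →* SL(2, R) where
  toFun u := ⟨!![(u : R), 0; 0, ↑u⁻¹], by simp⟩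
  map_one' := by
    refine Subtype.ext ?_
    ext i j
    fin_cases i <;> fin_cases j <;> simp
  map_mul' u v := by
    refine Subtype.ext ?_
    change !![((u * v : Rˣ) : R), 0; 0, ↑(u * v)⁻¹] =
      !![(u : R), 0; 0, ↑u⁻¹] * !![(v : R), 0; 0, ↑v⁻¹]
    simp [mul_comm]

theorem coe_diagUnits (u : Rˣ) :
    (diagUnits R u : Matrix (Fin 2) (Fin 2) R) = !![(u : R), 0; 0, ↑u⁻¹] := rfl

theorem coe_inv_diagUnits (u : Rˣ) :
    (↑(diagUnits R u)⁻¹ : Matrix (Fin 2) (Fin 2) R) = !![↑u⁻¹, 0; 0, (u : R)] := by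
  rw [Matrix.SpecialLinearGroup.coe_inv, coe_diagUnits, adjugate_fin_two_of]
  simp

theorem diagUnits_mul_elUp_mul_inv (u : Rˣ) (r : R) :
    diagUnits R u * elUp R r * (diagUnits R u)⁻¹ = elUp R (u * u * r) := by
  refine Subtype.ext ?_
  simp only [Matrix.SpecialLinearGroup.coe_mul, coe_diagUnits, coe_inv_diagUnits, coe_elUp]
  ext i j
  fin_cases i <;> fin_cases j <;> simp [mul_right_comm _ r]

theorem inv_diagUnits_mul_elLow_mul (u : Rˣ) (r : R) :
    (diagUnits R u)⁻¹ * elLow R r * diagUnits R u = elLow R (u * u * r) := by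
  refine Subtype.ext ?_
  simp only [Matrix.SpecialLinearGroup.coe_mul, coe_diagUnits, coe_inv_diagUnits, coe_elLow]
  ext i j
  fin_cases i <;> fin_cases j <;> simp [mul_right_comm _ r]

theorem diagUnits_eq_prod_elUp_elLow (u : Rˣ) :
    diagUnits R u =
      elUp R u * elLow R (-↑u⁻¹) * elUp R u * (elUp R (-1) * elLow R 1 * elUp R (-1)) := by
  refine Subtype.ext ?_
  simp only [Matrix.SpecialLinearGroup.coe_mul, coe_diagUnits, coe_elLow, coe_elUp]
  ext i j
  fin_cases i <;> fin_cases j <;> simp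

variable (R) in
def weyl : SL(2, R) := ⟨!![0, 1; -1, 0], by simp⟩

theorem coe_weyl : (weyl R : Matrix (Fin 2) (Fin 2) R) = !![0, 1; -1, 0] := rfl

theorem weyl_eq_prod_elUp_elLow : weyl R = elUp R 1 * elLow R (-1) * elUp R 1 := by
  refine Subtype.ext ?_
  simp only [Matrix.SpecialLinearGroup.coe_mul, coe_weyl, coe_elLow, coe_elUp]
  ext i j
  fin_cases i <;> fin_cases j <;> simp

theorem elUp_mem_Esub (r : R) : elUp R r ∈ Esub R :=
  Subgroup.subset_closure (Or.inl ⟨r, rfl⟩)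

theorem elLow_mem_Esub (r : R) : elLow R r ∈ Esub R :=
  Subgroup.subset_closure (Or.inr ⟨r, rfl⟩)

theorem diagUnits_mem_Esub (u : Rˣ) : diagUnits R u ∈ Esub R := by
  rw [diagUnits_eq_prod_elUp_elLow]
  refine mul_mem (mul_mem (mul_mem ?_ ?_) ?_) (mul_mem (mul_mem ?_ ?_) ?_) <;>
    first | exact elUp_mem_Esub _ | exact elLow_mem_Esub _

theorem weyl_mem_Esub : weyl R ∈ Esub R := by
  rw [weyl_eq_prod_elUp_elLow]
  exact mul_mem (mul_mem (elUp_mem_Esub _) (elLow_mem_Esub _)) (elUp_mem_Esub _)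

theorem mem_Esub_of_lower_left_eq_zero {M : SL(2, R)} (hM : M 1 0 = 0) : M ∈ Esub R := by
  have hdet : M 0 0 * M 1 1 = 1 := by
    have := M.2
    rwa [det_fin_two, hM, mul_zero, sub_zero] at this
  have hM : M = diagUnits R ⟨M 0 0, M 1 1, hdet, by rw [mul_comm, hdet]⟩ *
      elUp R (M 1 1 * M 0 1) := by
    refine Subtype.ext ?_
    simp only [Matrix.SpecialLinearGroup.coe_mul, coe_diagUnits, coe_elUp]
    ext i j
    fin_cases i <;> fin_cases j <;> simp [hM]
    linear_combination (M 0 1) * hdet.symm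
  rw [hM]
  exact mul_mem (diagUnits_mem_Esub _) (elUp_mem_Esub _)

theorem lower_left_inv_elUp_mul_weyl_mul (q : R) (M : SL(2, R)) :
    ((elUp R q * weyl R)⁻¹ * M) 1 0 = M 0 0 - q * M 1 0 := by
  rw [_root_.mul_inv_rev]
  simp only [Matrix.SpecialLinearGroup.coe_mul, Matrix.SpecialLinearGroup.coe_inv, coe_elUp,
    coe_weyl, adjugate_fin_two_of]
  simp [mul_apply, Fin.sum_univ_two]
  ring

theorem Esub_eq_top_of_forall_exists_sub_mul (μ : R → ℕ)
    (hdiv : ∀ a c, c ≠ 0 → ∃ q, a - q * c = 0 ∨ μ (a - q * c) < μ c) : Esub R = ⊤ := by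
  refine eq_top_iff.mpr fun M _ => ?_
  induction M using (measure fun M : SL(2, R) => μ (M 1 0)).wf.induction with
  | _ M ih =>
  by_cases hc : M 1 0 = 0
  · exact mem_Esub_of_lower_left_eq_zero hc
  obtain ⟨q, hq⟩ := hdiv (M 0 0) (M 1 0) hc
  rw [← mul_inv_cancel_left (elUp R q * weyl R) M]
  refine mul_mem (mul_mem (elUp_mem_Esub q) weyl_mem_Esub) ?_
  rw [← lower_left_inv_elUp_mul_weyl_mul] at hq
  rcases hq with hq | hq
  · exact mem_Esub_of_lower_left_eq_zero hq
  · exact ih _ hq (Subgroup.mem_top _)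

end Elementary

section Width

variable {R : Type} [CommRing R]

noncomputable def width (f : R[T;T⁻¹]) : ℕ :=
  sInf {n | ∃ (p : R[X]) (m : ℤ), p.natDegree = n ∧ f = toLaurent p * T m}

theorem width_toLaurent_mul_T_le (p : R[X]) (m : ℤ) :
    width (toLaurent p * T m) ≤ p.natDegree :=
  Nat.sInf_le ⟨p, m, rfl, rfl⟩

theorem exists_eq_toLaurent_mul_T_width (f : R[T;T⁻¹]) :
    ∃ (p : R[X]) (m : ℤ), p.natDegree = width f ∧ f = toLaurent p * T m := by
  refine Nat.sInf_mem
    (s := {n | ∃ (p : R[X]) (m : ℤ), p.natDegree = n ∧ f = toLaurent p * T m}) ?_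
  obtain ⟨n, p, hp⟩ := exists_T_pow f
  exact ⟨p.natDegree, p, -n, rfl, by rw [hp, mul_assoc, ← T_add, add_neg_cancel, T_zero, mul_one]⟩

end Width

theorem exists_sub_mul_eq_zero_or_width_lt {F : Type} [Field F] (a c : F[T;T⁻¹]) (hc : c ≠ 0) :
    ∃ q, a - q * c = 0 ∨ width (a - q * c) < width c := by
  obtain ⟨p, m, hp, rfl⟩ := exists_eq_toLaurent_mul_T_width c
  obtain ⟨pa, k, -, rfl⟩ := exists_eq_toLaurent_mul_T_width a
  have hp0 : p ≠ 0 := by rintro rfl; simp at hc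
  refine ⟨toLaurent (pa / p) * T (k - m), ?_⟩
  have hsub : toLaurent pa * T k - toLaurent (pa / p) * T (k - m) * (toLaurent p * T m) =
      toLaurent (pa % p) * T k := by
    have hT : (T (-m) : F[T;T⁻¹]) * T m = 1 := by rw [← T_add, neg_add_cancel, T_zero]
    rw [EuclideanDomain.mod_eq_sub_mul_div, map_sub, map_mul, T_sub]
    linear_combination (-(toLaurent (pa / p) * toLaurent p * T k)) * hT
  rw [hsub]
  by_cases hr : pa % p = 0
  · simp [hr]
  · right
    calc width (toLaurent (pa % p) * T k) ≤ (pa % p).natDegree := width_toLaurent_mul_T_le _ _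
      _ < p.natDegree := natDegree_lt_natDegree hr (degree_mod_lt _ hp0)
      _ = _ := hp

section Amalgam

variable {R : Type} [CommRing R]

theorem mem_range_conjP_of_X_dvd {B : SL(2, R[X])} (h : X ∣ B 0 1) : B ∈ (conjP R).range := by
  obtain ⟨b, hb⟩ := h
  have hdet : (!![B 0 0, b; X * B 1 0, B 1 1]).det = 1 := by
    have := B.2
    rw [det_fin_two, hb] at this
    rw [det_fin_two_of]
    linear_combination this
  refine ⟨⟨⟨_, hdet⟩, dvd_mul_right _ _⟩, Subtype.ext ?_⟩
  show conjMat R _ = B.1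
  refine Matrix.ext fun i j => ?_
  fin_cases i <;> fin_cases j <;> simp [conjMat, hb, divX_X_mul]

theorem conjP_injective : Function.Injective (conjP R) := fun A B h =>
  Subtype.ext <| Matrix.SpecialLinearGroup.map_injective toLaurent_injective <| by
    rw [← i₂SL_conjP, ← i₂SL_conjP, h]

theorem edgesP_injective : ∀ b, Function.Injective (edgesP R b)
  | true => Subtype.val_injective
  | false => conjP_injective

/-- `t · i₂(B)`, which has polynomial entries. -/
noncomputable def i₂Poly (B : SL(2, R[X])) : Matrix (Fin 2) (Fin 2) R[X] :=
  !![X * B 0 0, B 0 1; X ^ 2 * B 1 0, X * B 1 1]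

theorem coe_i₂SL (B : SL(2, R[X])) :
    (i₂SL R B : Matrix (Fin 2) (Fin 2) R[T;T⁻¹]) =
      (T (-1) : R[T;T⁻¹]) • (i₂Poly B).map toLaurent := by
  show diagonal ![1, T 1] * B.1.map toLaurent * diagonal ![1, T (-1)] = _
  refine Matrix.ext fun i j => ?_
  fin_cases i <;> fin_cases j <;> simp [i₂Poly]

noncomputable def letterPoly : (Σ _ : Bool, SL(2, R[X])) → Matrix (Fin 2) (Fin 2) R[X]
  | ⟨true, A⟩ => A
  | ⟨false, B⟩ => i₂Poly B

theorem coe_prod_legsP (l : List (Σ _ : Bool, SL(2, R[X]))) :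
    ((l.map fun σ => legsP R σ.1 σ.2).prod : Matrix (Fin 2) (Fin 2) R[T;T⁻¹]) =
      (T (-(l.countP (fun σ => !σ.1) : ℤ)) : R[T;T⁻¹]) •
        ((l.map letterPoly).prod).map toLaurent := by
  induction l with
  | nil => simp
  | cons σ l ih =>
    rw [List.map_cons, List.prod_cons, Matrix.SpecialLinearGroup.coe_mul, ih, List.map_cons,
      List.prod_cons, Matrix.map_mul, Matrix.mul_smul]
    obtain ⟨_ | _, A⟩ := σ
    · rw [show legsP R false A = i₂SL R A from rfl, coe_i₂SL, Matrix.smul_mul, smul_smul,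
        ← T_add]
      simp [letterPoly]
      ring_nf
    · simp [letterPoly, legsP]

theorem amalgamToSL_ofCoprodI_prod (w : Monoid.CoprodI.Word fun _ : Bool => SL(2, R[X])) :
    amalgamToSL R (Monoid.PushoutI.ofCoprodI w.prod) =
      (w.toList.map fun σ => legsP R σ.1 σ.2).prod := by
  rw [Monoid.CoprodI.Word.prod, map_list_prod, map_list_prod, List.map_map, List.map_map]
  refine congrArg _ (List.map_congr_left fun σ _ => ?_)
  simp only [Function.comp_apply, Monoid.PushoutI.ofCoprodI_of, amalgamToSL,
    Monoid.PushoutI.lift_of]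

theorem pingPongLetter_letterPoly {σ : Σ _ : Bool, SL(2, R[X])}
    (hσ : σ.2 ∉ (edgesP R σ.1).range) :
    PingPongLetter σ.1 ((letterPoly σ).map constantCoeff) := by
  obtain ⟨_ | _, A⟩ := σ
  · have hA : ¬ X ∣ A 0 1 := fun h => hσ (mem_range_conjP_of_X_dvd h)
    refine ⟨(A 0 1).coeff 0, mt X_dvd_iff.mpr hA, Matrix.ext fun i j => ?_⟩
    fin_cases i <;> fin_cases j <;> simp [letterPoly, i₂Poly]
  · have hA : ¬ X ∣ A 1 0 := fun h => hσ ⟨⟨A, h⟩, rfl⟩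
    simpa [PingPongLetter, letterPoly, X_dvd_iff] using hA

theorem letterPoly_prod_eq_X_pow_smul {l : List (Σ _ : Bool, SL(2, R[X]))}
    {H : Matrix (Fin 2) (Fin 2) R[X]}
    (h : ((l.map fun σ => legsP R σ.1 σ.2).prod : Matrix (Fin 2) (Fin 2) R[T;T⁻¹]) =
      H.map toLaurent) :
    (l.map letterPoly).prod = (X ^ l.countP (fun σ => !σ.1) : R[X]) • H := by
  apply Matrix.map_injective toLaurent_injective
  rw [coe_prod_legsP] at h
  dsimp only
  rw [Matrix.map_smul' _ _ _ (map_mul toLaurent), toLaurent_X_pow, ← h, smul_smul, ← T_add,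
    add_neg_cancel, T_zero, one_smul]

theorem map_constantCoeff_letterPoly_prod_ne_zero [NoZeroDivisors R]
    {l : List (Σ _ : Bool, SL(2, R[X]))} (hl : l ≠ [])
    (hchain : l.IsChain (fun σ τ => σ.1 ≠ τ.1)) (hred : ∀ σ ∈ l, σ.2 ∉ (edgesP R σ.1).range) :
    ((l.map letterPoly).prod).map constantCoeff ≠ 0 := by
  let l' := l.map fun σ =>
    (⟨σ.1, (letterPoly σ).map constantCoeff⟩ : Σ _ : Bool, Matrix (Fin 2) (Fin 2) R)
  have hprod : ((l.map letterPoly).prod).map constantCoeff = (l'.map Sigma.snd).prod := by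
    rw [← RingHom.mapMatrix_apply, map_list_prod, List.map_map, List.map_map]
    rfl
  rw [hprod]
  exact prod_ne_zero_of_isChain l' (by simpa [l'] using hl) ((List.isChain_map _).mpr hchain)
    (List.forall_mem_map.mpr fun σ hσ => pingPongLetter_letterPoly (hred σ hσ))

theorem amalgamToSL_injective [NoZeroDivisors R] : Function.Injective (amalgamToSL R) := by
  have hbase : (amalgamToSL R).comp (Monoid.PushoutI.base (edgesP R)) =
      (Matrix.SpecialLinearGroup.map toLaurent).comp (Psub R).subtype :=
    MonoidHom.ext (Monoid.PushoutI.lift_base _ _ (compatP R))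
  refine Monoid.PushoutI.injective_of_reduced_word_not_mem_range edgesP_injective _ ?_ ?_
  · rw [hbase]
    exact (Matrix.SpecialLinearGroup.map_injective toLaurent_injective).comp
      Subtype.val_injective
  rintro w hw hne ⟨⟨⟨H, hdet⟩, hH⟩, hh⟩
  rw [hbase, MonoidHom.comp_apply, amalgamToSL_ofCoprodI_prod] at hh
  have hl : w.toList ≠ [] := fun h => hne (Monoid.CoprodI.Word.ext h)
  rcases Nat.eq_zero_or_pos (w.toList.countP fun σ => !σ.1) with hk | hk
  · obtain ⟨A, hA⟩ := List.exists_eq_singleton_of_isChain_of_countP_eq_zero hl w.chain_ne hk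
    refine hw ⟨true, A⟩ (by simp [hA]) ⟨⟨⟨H, hdet⟩, hH⟩, ?_⟩
    exact Matrix.SpecialLinearGroup.map_injective toLaurent_injective
      (by simpa [hA, legsP, edgesP] using hh)
  · refine map_constantCoeff_letterPoly_prod_ne_zero hl w.chain_ne hw ?_
    rw [letterPoly_prod_eq_X_pow_smul (congrArg Subtype.val hh).symm]
    ext i j
    simp [hk.ne]

theorem map_mem_range_amalgamToSL (A : SL(2, R[X])) :
    Matrix.SpecialLinearGroup.map toLaurent A ∈ (amalgamToSL R).range :=
  ⟨Monoid.PushoutI.of true A, Monoid.PushoutI.lift_of (legsP R) _ (compatP R) A⟩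

theorem i₂SL_mem_range_amalgamToSL (B : SL(2, R[X])) : i₂SL R B ∈ (amalgamToSL R).range :=
  ⟨Monoid.PushoutI.of false B, Monoid.PushoutI.lift_of (legsP R) _ (compatP R) B⟩

variable (R) in
noncomputable def unitT : R[T;T⁻¹]ˣ :=
  ⟨T 1, T (-1), by rw [← T_add, add_neg_cancel, T_zero], by rw [← T_add, neg_add_cancel, T_zero]⟩

theorem coe_unitT_pow (n : ℕ) : ((unitT R ^ n : R[T;T⁻¹]ˣ) : R[T;T⁻¹]) = T n := by
  rw [Units.val_pow_eq_pow_val, unitT, Units.val_mk, T_pow, mul_one]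

theorem diagUnits_unitT_mem_range : diagUnits _ (unitT R) ∈ (amalgamToSL R).range := by
  have h : diagUnits _ (unitT R) =
      Matrix.SpecialLinearGroup.map toLaurent (weyl R[X]) * (i₂SL R (weyl R[X]))⁻¹ := by
    rw [eq_mul_inv_iff_mul_eq]
    refine Subtype.ext ?_
    simp only [Matrix.SpecialLinearGroup.coe_mul, coe_diagUnits, coe_i₂SL,
      Matrix.SpecialLinearGroup.map_apply_coe, coe_weyl]
    have hw : i₂Poly (weyl R[X]) = !![0, 1; -X ^ 2, 0] := by
      rw [i₂Poly, coe_weyl]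
      simp
    rw [hw]
    refine Matrix.ext fun i j => ?_
    fin_cases i <;> fin_cases j <;>
      simp only [unitT, Units.val_mk, Units.inv_mk, mul_apply, Fin.sum_univ_two,
        Matrix.smul_apply, smul_eq_mul, RingHom.mapMatrix_apply, map_apply, of_apply, cons_val',
        cons_val_zero, cons_val_one, empty_val', cons_val_fin_one, Fin.zero_eta, Fin.mk_one,
        map_zero, map_one, map_neg, toLaurent_X_pow, mul_zero, zero_mul, add_zero, zero_add,
        mul_one, mul_neg, neg_zero, ← mul_assoc, ← T_add, Nat.cast_ofNat, Int.reduceNeg,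
        Int.reduceAdd, T_zero]
  rw [h]
  exact mul_mem (map_mem_range_amalgamToSL _) (inv_mem (i₂SL_mem_range_amalgamToSL _))

theorem elUp_mem_range_amalgamToSL (f : R[T;T⁻¹]) : elUp _ f ∈ (amalgamToSL R).range := by
  obtain ⟨n, p, hp⟩ := exists_T_pow f
  set D := diagUnits _ (unitT R ^ n)
  have hD : D ∈ (amalgamToSL R).range := by
    simpa only [D, map_pow] using pow_mem diagUnits_unitT_mem_range n
  have hconj : D * elUp _ f * D⁻¹ = elUp _ (toLaurent (X ^ n * p)) := by
    rw [diagUnits_mul_elUp_mul_inv, coe_unitT_pow, map_mul, hp, toLaurent_X_pow]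
    congr 1
    ring
  rw [show elUp _ f = D⁻¹ * (D * elUp _ f * D⁻¹) * D by group, hconj, ← map_elUp]
  exact mul_mem (mul_mem (inv_mem hD) (map_mem_range_amalgamToSL _)) hD

theorem elLow_mem_range_amalgamToSL (f : R[T;T⁻¹]) : elLow _ f ∈ (amalgamToSL R).range := by
  obtain ⟨n, p, hp⟩ := exists_T_pow f
  set D := diagUnits _ (unitT R ^ n)
  have hD : D ∈ (amalgamToSL R).range := by
    simpa only [D, map_pow] using pow_mem diagUnits_unitT_mem_range n
  have hconj : D⁻¹ * elLow _ f * D = elLow _ (toLaurent (X ^ n * p)) := by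
    rw [inv_diagUnits_mul_elLow_mul, coe_unitT_pow, map_mul, hp, toLaurent_X_pow]
    congr 1
    ring
  rw [show elLow _ f = D * (D⁻¹ * elLow _ f * D) * D⁻¹ by group, hconj, ← map_elLow]
  exact mul_mem (mul_mem hD (map_mem_range_amalgamToSL _)) (inv_mem hD)

theorem Esub_le_range_amalgamToSL : Esub R[T;T⁻¹] ≤ (amalgamToSL R).range := by
  refine (Subgroup.closure_le _).mpr ?_
  rintro _ (⟨f, rfl⟩ | ⟨f, rfl⟩)
  exacts [elUp_mem_range_amalgamToSL f, elLow_mem_range_amalgamToSL f]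

end Amalgam

theorem amalgamToSL_surjective {F : Type} [Field F] : Function.Surjective (amalgamToSL F) := by
  rw [← MonoidHom.range_eq_top, eq_top_iff,
    ← Esub_eq_top_of_forall_exists_sub_mul width exists_sub_mul_eq_zero_or_width_lt]
  exact Esub_le_range_amalgamToSL

end Paper

open Paper in
/-- For any field `F`, `SL₂(F[t,t⁻¹])` is the amalgamated free product
`SL₂(F[t]) *_{Γ(F)} SL₂(F[t])`: the natural homomorphism, given by the canonical inclusion on
the first free factor and by `i₂` on the second, is an isomorphism. -/
theorem amalgam_SL2_Laurent_field (F : Type) [Field F] :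
    Function.Bijective (amalgamToSL F) :=
  ⟨amalgamToSL_injective, amalgamToSL_surjective⟩
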